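/- A mixed unlinking–linking relation (first relation of (3.7)): Let (C,x) be a quiver pair with m nodes and let i, j, k be pairwise distinct nodes. Let A be the result of applying to (C,x) the operations U(i,j), then L(j,k), then L(m+1,k), then U(j,m+3), and let B be the result of applying L(j,k), then U(i,j), then U(i,m+1), then U(m+2,m+1) (in each case the node created at step t has index m+t, so A and B have m+4 nodes). Then A and B are permutation-equivalent rel the first m nodes, i.e. there is a permutation π of {1,…,m+4} fixing every a ≤ m such that A's matrix at (a,b) equals B's matrix at (π(a),π(b)) and A's variable at a equals B's variable at π(a), for all a,b. -/
import Mathlib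

namespace QuiverUnlink

def unlinkC {m : ℕ} (C : Fin m → Fin m → ℤ) (i j : Fin m) :
    Fin (m + 1) → Fin (m + 1) → ℤ := fun a b =>
  if ha : (a : ℕ) < m then
    if hb : (b : ℕ) < m then
      if ((⟨a, ha⟩ : Fin m) = i ∧ (⟨b, hb⟩ : Fin m) = j) ∨
         ((⟨a, ha⟩ : Fin m) = j ∧ (⟨b, hb⟩ : Fin m) = i) then
        C i j - 1
      else C ⟨a, ha⟩ ⟨b, hb⟩
    else
      if (⟨a, ha⟩ : Fin m) = i then C i i + C i j - 1
      else if (⟨a, ha⟩ : Fin m) = j then C j j + C i j - 1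
      else C ⟨a, ha⟩ i + C ⟨a, ha⟩ j
  else
    if hb : (b : ℕ) < m then
      if (⟨b, hb⟩ : Fin m) = i then C i i + C i j - 1
      else if (⟨b, hb⟩ : Fin m) = j then C j j + C i j - 1
      else C ⟨b, hb⟩ i + C ⟨b, hb⟩ j
    else C i i + C j j + 2 * C i j - 1

def unlinkX {G : Type*} [CommGroup G] {m : ℕ} (q : G) (x : Fin m → G) (i j : Fin m) :
    Fin (m + 1) → G := fun a =>
  if ha : (a : ℕ) < m then x ⟨a, ha⟩ else q⁻¹ * x i * x j

def linkC {m : ℕ} (C : Fin m → Fin m → ℤ) (i j : Fin m) :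
    Fin (m + 1) → Fin (m + 1) → ℤ := fun a b =>
  if ha : (a : ℕ) < m then
    if hb : (b : ℕ) < m then
      if ((⟨a, ha⟩ : Fin m) = i ∧ (⟨b, hb⟩ : Fin m) = j) ∨
         ((⟨a, ha⟩ : Fin m) = j ∧ (⟨b, hb⟩ : Fin m) = i) then
        C i j + 1
      else C ⟨a, ha⟩ ⟨b, hb⟩
    else
      if (⟨a, ha⟩ : Fin m) = i then C i i + C i j
      else if (⟨a, ha⟩ : Fin m) = j then C j j + C i j
      else C ⟨a, ha⟩ i + C ⟨a, ha⟩ j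
  else
    if hb : (b : ℕ) < m then
      if (⟨b, hb⟩ : Fin m) = i then C i i + C i j
      else if (⟨b, hb⟩ : Fin m) = j then C j j + C i j
      else C ⟨b, hb⟩ i + C ⟨b, hb⟩ j
    else C i i + C j j + 2 * C i j

def linkX {G : Type*} [CommGroup G] {m : ℕ} (x : Fin m → G) (i j : Fin m) :
    Fin (m + 1) → G := fun a =>
  if ha : (a : ℕ) < m then x ⟨a, ha⟩ else x i * x j

section EvalLemmas

variable {m : ℕ} (C : Fin m → Fin m → ℤ) (i j : Fin m)

theorem unlinkC_lt_lt {a b : Fin (m+1)} (ha : (a:ℕ) < m) (hb : (b:ℕ) < m) :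
    unlinkC C i j a b =
      if (a:ℕ) = i then (if (b:ℕ) = j then C i j - 1 else C ⟨a,ha⟩ ⟨b,hb⟩)
      else if (a:ℕ) = j then (if (b:ℕ) = i then C i j - 1 else C ⟨a,ha⟩ ⟨b,hb⟩)
      else C ⟨a,ha⟩ ⟨b,hb⟩ := by
  simp only [unlinkC, dif_pos ha, dif_pos hb, Fin.ext_iff]
  split_ifs <;> simp_all

theorem unlinkC_lt_eq {a b : Fin (m+1)} (ha : (a:ℕ) < m) (hb : (b:ℕ) = m) :
    unlinkC C i j a b =
      if (a:ℕ) = i then C i i + C i j - 1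
      else if (a:ℕ) = j then C j j + C i j - 1
      else C ⟨a,ha⟩ i + C ⟨a,ha⟩ j := by
  have hb' : ¬ ((b:ℕ) < m) := by omega
  simp only [unlinkC, dif_pos ha, dif_neg hb', Fin.ext_iff]

theorem unlinkC_eq_lt {a b : Fin (m+1)} (ha : (a:ℕ) = m) (hb : (b:ℕ) < m) :
    unlinkC C i j a b =
      if (b:ℕ) = i then C i i + C i j - 1
      else if (b:ℕ) = j then C j j + C i j - 1
      else C ⟨b,hb⟩ i + C ⟨b,hb⟩ j := by
  have ha' : ¬ ((a:ℕ) < m) := by omega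
  simp only [unlinkC, dif_neg ha', dif_pos hb, Fin.ext_iff]

theorem unlinkC_eq_eq {a b : Fin (m+1)} (ha : (a:ℕ) = m) (hb : (b:ℕ) = m) :
    unlinkC C i j a b = C i i + C j j + 2 * C i j - 1 := by
  have ha' : ¬ ((a:ℕ) < m) := by omega
  have hb' : ¬ ((b:ℕ) < m) := by omega
  simp only [unlinkC, dif_neg ha', dif_neg hb']

theorem linkC_lt_lt {a b : Fin (m+1)} (ha : (a:ℕ) < m) (hb : (b:ℕ) < m) :
    linkC C i j a b =
      if (a:ℕ) = i then (if (b:ℕ) = j then C i j + 1 else C ⟨a,ha⟩ ⟨b,hb⟩)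
      else if (a:ℕ) = j then (if (b:ℕ) = i then C i j + 1 else C ⟨a,ha⟩ ⟨b,hb⟩)
      else C ⟨a,ha⟩ ⟨b,hb⟩ := by
  simp only [linkC, dif_pos ha, dif_pos hb, Fin.ext_iff]
  split_ifs <;> simp_all

theorem linkC_lt_eq {a b : Fin (m+1)} (ha : (a:ℕ) < m) (hb : (b:ℕ) = m) :
    linkC C i j a b =
      if (a:ℕ) = i then C i i + C i j
      else if (a:ℕ) = j then C j j + C i j
      else C ⟨a,ha⟩ i + C ⟨a,ha⟩ j := by
  have hb' : ¬ ((b:ℕ) < m) := by omega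
  simp only [linkC, dif_pos ha, dif_neg hb', Fin.ext_iff]

theorem linkC_eq_lt {a b : Fin (m+1)} (ha : (a:ℕ) = m) (hb : (b:ℕ) < m) :
    linkC C i j a b =
      if (b:ℕ) = i then C i i + C i j
      else if (b:ℕ) = j then C j j + C i j
      else C ⟨b,hb⟩ i + C ⟨b,hb⟩ j := by
  have ha' : ¬ ((a:ℕ) < m) := by omega
  simp only [linkC, dif_neg ha', dif_pos hb, Fin.ext_iff]

theorem linkC_eq_eq {a b : Fin (m+1)} (ha : (a:ℕ) = m) (hb : (b:ℕ) = m) :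
    linkC C i j a b = C i i + C j j + 2 * C i j := by
  have ha' : ¬ ((a:ℕ) < m) := by omega
  have hb' : ¬ ((b:ℕ) < m) := by omega
  simp only [linkC, dif_neg ha', dif_neg hb']

variable {G : Type*} [CommGroup G] (q : G) (x : Fin m → G)

theorem unlinkX_lt {a : Fin (m+1)} (ha : (a:ℕ) < m) :
    unlinkX q x i j a = x ⟨a, ha⟩ := by simp only [unlinkX, dif_pos ha]

theorem unlinkX_eq {a : Fin (m+1)} (ha : (a:ℕ) = m) :
    unlinkX q x i j a = q⁻¹ * x i * x j := by
  have ha' : ¬ ((a:ℕ) < m) := by omega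
  simp only [unlinkX, dif_neg ha']

theorem linkX_lt {a : Fin (m+1)} (ha : (a:ℕ) < m) :
    linkX x i j a = x ⟨a, ha⟩ := by simp only [linkX, dif_pos ha]

theorem linkX_eq {a : Fin (m+1)} (ha : (a:ℕ) = m) :
    linkX x i j a = x i * x j := by
  have ha' : ¬ ((a:ℕ) < m) := by omega
  simp only [linkX, dif_neg ha']

end EvalLemmas


set_option maxHeartbeats 12000000 in
/-- **A mixed unlinking–linking relation** (first relation of (3.7)).
For pairwise distinct nodes `i, j, k`, applying `U(i,j)`, `L(j,k)`, `L(m+1,k)`, `U(j,m+3)`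
and applying `L(j,k)`, `U(i,j)`, `U(i,m+1)`, `U(m+2,m+1)` (the node created at step `t` having
index `m+t-1` in `Fin (m+4)`) give quiver pairs that are permutation-equivalent rel the first
`m` nodes: there is a permutation `π` of the `m+4` nodes fixing the first `m` of them that
relabels one into the other. -/
theorem mixed_relation {G : Type*} [CommGroup G] (q : G) {m : ℕ}
    (C : Fin m → Fin m → ℤ) (hC : ∀ a b, C a b = C b a) (x : Fin m → G)
    (i j k : Fin m) (hij : i ≠ j) (hjk : j ≠ k) (hik : i ≠ k) :
    let A : Fin (m + 4) → Fin (m + 4) → ℤ :=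
      unlinkC (linkC (linkC (unlinkC C i j) j.castSucc k.castSucc)
          ⟨m, by omega⟩ (k.castSucc.castSucc))
        (j.castSucc.castSucc.castSucc) ⟨m + 2, by omega⟩
    let Ax : Fin (m + 4) → G :=
      unlinkX q (linkX (linkX (unlinkX q x i j) j.castSucc k.castSucc)
          ⟨m, by omega⟩ (k.castSucc.castSucc))
        (j.castSucc.castSucc.castSucc) ⟨m + 2, by omega⟩
    let B : Fin (m + 4) → Fin (m + 4) → ℤ :=
      unlinkC (unlinkC (unlinkC (linkC C j k) i.castSucc j.castSucc)
          (i.castSucc.castSucc) ⟨m, by omega⟩)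
        ⟨m + 1, by omega⟩ ⟨m, by omega⟩
    let Bx : Fin (m + 4) → G :=
      unlinkX q (unlinkX q (unlinkX q (linkX x j k) i.castSucc j.castSucc)
          (i.castSucc.castSucc) ⟨m, by omega⟩)
        ⟨m + 1, by omega⟩ ⟨m, by omega⟩
    ∃ π : Equiv.Perm (Fin (m + 4)),
      (∀ a : Fin (m + 4), (a : ℕ) < m → π a = a) ∧
      (∀ a b, A a b = B (π a) (π b)) ∧
      (∀ a, Ax a = Bx (π a)) := by
  intro A Ax B Bx
  have hij' : (i:ℕ) ≠ j := fun h => hij (Fin.ext h)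
  have hjk' : (j:ℕ) ≠ k := fun h => hjk (Fin.ext h)
  have hik' : (i:ℕ) ≠ k := fun h => hik (Fin.ext h)
  set p0 : Fin (m+4) := ⟨m, by omega⟩ with hp0
  set p1 : Fin (m+4) := ⟨m+1, by omega⟩ with hp1
  have hswap : ∀ u : Fin (m+4), (u:ℕ) ≠ m → (u:ℕ) ≠ m+1 → Equiv.swap p0 p1 u = u := by
    intro u h1 h2
    exact Equiv.swap_apply_of_ne_of_ne (fun h => h1 (by rw [h])) (fun h => h2 (by rw [h]))
  have hs0 : ∀ h : m < m + 4, Equiv.swap p0 p1 ⟨m, h⟩ = ⟨m+1, by omega⟩ := by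
    intro h; exact Equiv.swap_apply_left p0 p1
  have hs1 : ∀ h : m+1 < m + 4, Equiv.swap p0 p1 ⟨m+1, h⟩ = ⟨m, by omega⟩ := by
    intro h; exact Equiv.swap_apply_right p0 p1
  set A1 : Fin (m+1) → Fin (m+1) → ℤ := unlinkC C i j with hA1
  set A2 : Fin (m+2) → Fin (m+2) → ℤ := linkC A1 j.castSucc k.castSucc with hA2
  set A3 : Fin (m+3) → Fin (m+3) → ℤ := linkC A2 ⟨m, by omega⟩ k.castSucc.castSucc with hA3
  set B1 : Fin (m+1) → Fin (m+1) → ℤ := linkC C j k with hB1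
  set B2 : Fin (m+2) → Fin (m+2) → ℤ := unlinkC B1 i.castSucc j.castSucc with hB2
  set B3 : Fin (m+3) → Fin (m+3) → ℤ := unlinkC B2 i.castSucc.castSucc ⟨m, by omega⟩ with hB3
  set X1 : Fin (m+1) → G := unlinkX q x i j with hX1
  set X2 : Fin (m+2) → G := linkX X1 j.castSucc k.castSucc with hX2
  set X3 : Fin (m+3) → G := linkX X2 ⟨m, by omega⟩ k.castSucc.castSucc with hX3
  set Y1 : Fin (m+1) → G := linkX x j k with hY1
  set Y2 : Fin (m+2) → G := unlinkX q Y1 i.castSucc j.castSucc with hY2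
  set Y3 : Fin (m+3) → G := unlinkX q Y2 i.castSucc.castSucc ⟨m, by omega⟩ with hY3
  refine ⟨Equiv.swap p0 p1, ?_, ?_, ?_⟩
  · intro a ha; exact hswap a (by omega) (by omega)
  · intro a b
    show unlinkC A3 (j.castSucc.castSucc.castSucc) ⟨m + 2, by omega⟩ a b =
      unlinkC B3 ⟨m + 1, by omega⟩ ⟨m, by omega⟩
        (Equiv.swap p0 p1 a) (Equiv.swap p0 p1 b)
    obtain ⟨a, hA⟩ := a
    obtain ⟨b, hB⟩ := b
    have pa : a = (i:ℕ) ∨ a = (j:ℕ) ∨ a = (k:ℕ) ∨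
        (a < m ∧ a ≠ (i:ℕ) ∧ a ≠ (j:ℕ) ∧ a ≠ (k:ℕ)) ∨
        a = m ∨ a = m+1 ∨ a = m+2 ∨ a = m+3 := by omega
    have pb : b = (i:ℕ) ∨ b = (j:ℕ) ∨ b = (k:ℕ) ∨
        (b < m ∧ b ≠ (i:ℕ) ∧ b ≠ (j:ℕ) ∧ b ≠ (k:ℕ)) ∨
        b = m ∨ b = m+1 ∨ b = m+2 ∨ b = m+3 := by omega
    rcases pa with rfl | rfl | rfl | ⟨ha, hai, haj, hak⟩ | rfl | rfl | rfl | rfl <;>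
      rcases pb with rfl | rfl | rfl | ⟨hb, hbi, hbj, hbk⟩ | rfl | rfl | rfl | rfl <;>
    · try simp (disch := first | omega | (simp only [Fin.val_mk, Fin.coe_castSucc]; omega) | simp only [Fin.val_mk, Fin.coe_castSucc]) only
        [hswap, hs0, hs1, unlinkC_lt_lt, unlinkC_lt_eq, unlinkC_eq_lt, unlinkC_eq_eq,
         Fin.val_mk, Fin.coe_castSucc, Fin.eta, if_pos, if_neg, if_true, if_false, eq_self_iff_true, ite_self]
      try simp only [hA3, hB3]
      try simp (disch := first | omega | (simp only [Fin.val_mk, Fin.coe_castSucc]; omega) | simp only [Fin.val_mk, Fin.coe_castSucc]) only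
        [unlinkC_lt_lt, unlinkC_lt_eq, unlinkC_eq_lt, unlinkC_eq_eq,
         linkC_lt_lt, linkC_lt_eq, linkC_eq_lt, linkC_eq_eq,
         Fin.val_mk, Fin.coe_castSucc, Fin.eta, if_pos, if_neg, if_true, if_false, eq_self_iff_true, ite_self]
      try simp only [hA2, hB2]
      try simp (disch := first | omega | (simp only [Fin.val_mk, Fin.coe_castSucc]; omega) | simp only [Fin.val_mk, Fin.coe_castSucc]) only
        [unlinkC_lt_lt, unlinkC_lt_eq, unlinkC_eq_lt, unlinkC_eq_eq,
         linkC_lt_lt, linkC_lt_eq, linkC_eq_lt, linkC_eq_eq,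
         Fin.val_mk, Fin.coe_castSucc, Fin.eta, if_pos, if_neg, if_true, if_false, eq_self_iff_true, ite_self]
      try simp only [hA1, hB1]
      try simp (disch := first | omega | (simp only [Fin.val_mk, Fin.coe_castSucc]; omega) | simp only [Fin.val_mk, Fin.coe_castSucc]) only
        [unlinkC_lt_lt, unlinkC_lt_eq, unlinkC_eq_lt, unlinkC_eq_eq,
         linkC_lt_lt, linkC_lt_eq, linkC_eq_lt, linkC_eq_eq,
         Fin.val_mk, Fin.coe_castSucc, Fin.eta, if_pos, if_neg, if_true, if_false, eq_self_iff_true, ite_self]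
      try first
        | rfl
        | linarith [hC i j, hC j i, hC i k, hC k i, hC j k, hC k j]
  · intro a
    show unlinkX q X3 (j.castSucc.castSucc.castSucc) ⟨m + 2, by omega⟩ a =
      unlinkX q Y3 ⟨m + 1, by omega⟩ ⟨m, by omega⟩ (Equiv.swap p0 p1 a)
    obtain ⟨a, hA⟩ := a
    have pa : a = (i:ℕ) ∨ a = (j:ℕ) ∨ a = (k:ℕ) ∨
        (a < m ∧ a ≠ (i:ℕ) ∧ a ≠ (j:ℕ) ∧ a ≠ (k:ℕ)) ∨
        a = m ∨ a = m+1 ∨ a = m+2 ∨ a = m+3 := by omega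
    rcases pa with rfl | rfl | rfl | ⟨ha, hai, haj, hak⟩ | rfl | rfl | rfl | rfl <;>
    · try simp (disch := first | omega | (simp only [Fin.val_mk, Fin.coe_castSucc]; omega) | simp only [Fin.val_mk, Fin.coe_castSucc]) only
        [hswap, hs0, hs1, unlinkX_lt, unlinkX_eq, Fin.val_mk, Fin.coe_castSucc, Fin.eta]
      try simp only [hX3, hY3]
      try simp (disch := first | omega | (simp only [Fin.val_mk, Fin.coe_castSucc]; omega) | simp only [Fin.val_mk, Fin.coe_castSucc]) only
        [unlinkX_lt, unlinkX_eq, linkX_lt, linkX_eq, Fin.val_mk, Fin.coe_castSucc, Fin.eta]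
      try simp only [hX2, hY2]
      try simp (disch := first | omega | (simp only [Fin.val_mk, Fin.coe_castSucc]; omega) | simp only [Fin.val_mk, Fin.coe_castSucc]) only
        [unlinkX_lt, unlinkX_eq, linkX_lt, linkX_eq, Fin.val_mk, Fin.coe_castSucc, Fin.eta]
      try simp only [hX1, hY1]
      try simp (disch := first | omega | (simp only [Fin.val_mk, Fin.coe_castSucc]; omega) | simp only [Fin.val_mk, Fin.coe_castSucc]) only
        [unlinkX_lt, unlinkX_eq, linkX_lt, linkX_eq, Fin.val_mk, Fin.coe_castSucc, Fin.eta]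
      try first
        | rfl
        | (simp only [mul_comm, mul_left_comm, mul_assoc])

end QuiverUnlink
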